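/- Let Θ be a non-constant inner function and φ ∈ H². Then ‖P_Θ(φ)‖ / (1 - |Θ(0)|²)^{1/2} ≤ ‖A_φ‖. -/

import Mathlib

open MeasureTheory Complex Filter
open scoped ENNReal

noncomputable section

instance : Fact (0 < 2 * Real.pi) := ⟨by positivity⟩

/-- The circle group `ℝ / 2πℤ`, parametrizing the unit circle `∂𝔻`. -/
abbrev 𝕋 := AddCircle (2 * Real.pi)

/-- Normalized arclength (Haar) measure `|dζ|/2π` on the circle. -/
abbrev μT : Measure 𝕋 := AddCircle.haarAddCircle

/-- The boundary point `e^{iθ} ∈ ∂𝔻` corresponding to `θ : 𝕋`. -/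
def bz (θ : 𝕋) : ℂ := (AddCircle.toCircle θ : ℂ)

/-- The `L²(∂𝔻, |dζ|/2π)` inner product `⟨f, g⟩ = ∫ f conj(g)`. -/
def ip (f g : 𝕋 → ℂ) : ℂ := ∫ θ, f θ * (starRingEnd ℂ) (g θ) ∂μT

/-- The `L²(∂𝔻, |dζ|/2π)` norm. -/
def nrm2 (f : 𝕋 → ℂ) : ℝ := (∫ θ, ‖f θ‖ ^ 2 ∂μT) ^ (1 / 2 : ℝ)

/-- The essential supremum (`L^∞`) norm on `∂𝔻`. -/
def nrmInf (f : 𝕋 → ℂ) : ℝ := (eLpNorm f ⊤ μT).toReal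

/-- `f` belongs to the Hardy space `H²`, viewed via boundary values: `f ∈ L²` and all
negatively-indexed Fourier coefficients vanish. -/
def MemH2 (f : 𝕋 → ℂ) : Prop :=
  MemLp f 2 μT ∧ ∀ n : ℤ, n < 0 → fourierCoeff f n = 0

/-- An inner function, recorded through its boundary values: an `H²` function which is
unimodular a.e. on `∂𝔻`. -/
structure InnerFn where
  toFun : 𝕋 → ℂ
  memH2 : MemH2 toFun
  unimod : ∀ᵐ θ ∂μT, ‖toFun θ‖ = 1

/-- The Poisson extension `𝔓f` of a boundary function `f` at a point `l` of `𝔻`. -/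
def poisson (f : 𝕋 → ℂ) (l : ℂ) : ℂ :=
  ∫ θ, (((1 - ‖l‖ ^ 2) / ‖bz θ - l‖ ^ 2 : ℝ) : ℂ) * f θ ∂μT

/-- The value `Θ(l)` of an inner function at a point `l ∈ 𝔻`, recovered from its
boundary values by the Poisson integral. -/
def InnerFn.dval (Θ : InnerFn) (l : ℂ) : ℂ := poisson Θ.toFun l

/-- `Θ` is a non-constant inner function. -/
def InnerFn.NonConst (Θ : InnerFn) : Prop := ¬ ∃ c : ℂ, ∀ᵐ θ ∂μT, Θ.toFun θ = c

/-- Membership in the model space `K_Θ = H² ⊖ ΘH²`: `f ∈ H²` and `f ⟂ Θg` for all `g ∈ H²`. -/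
def MemK (Θ : InnerFn) (f : 𝕋 → ℂ) : Prop :=
  MemH2 f ∧ ∀ g : 𝕋 → ℂ, MemH2 g → ip f (fun θ => Θ.toFun θ * g θ) = 0

/-- `p` is the orthogonal projection `P_Θ(u)` of `u ∈ L²` onto the model space `K_Θ`:
`p ∈ K_Θ` and `u - p ⟂ K_Θ`. -/
def IsProjK (Θ : InnerFn) (u p : 𝕋 → ℂ) : Prop :=
  MemK Θ p ∧ ∀ k : 𝕋 → ℂ, MemK Θ k → ip (fun θ => u θ - p θ) k = 0

/-- The norm (possibly `∞`) of the truncated Toeplitz operator `A_φ f = P_Θ(φ f)`,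
densely defined on `K_Θ^∞ = K_Θ ∩ H^∞`: the supremum of `‖P_Θ(φ f)‖` over unit vectors
`f ∈ K_Θ ∩ H^∞`. -/
def ttNorm (Θ : InnerFn) (φ : 𝕋 → ℂ) : ℝ≥0∞ :=
  sSup {c : ℝ≥0∞ | ∃ f p : 𝕋 → ℂ, MemK Θ f ∧ MemLp f ⊤ μT ∧ nrm2 f = 1 ∧
    IsProjK Θ (fun θ => φ θ * f θ) p ∧ c = ENNReal.ofReal (nrm2 p)}

/-- The reproducing kernel `k_λ(z) = (1 - conj(Θ(λ))Θ(z))/(1 - conj(λ)z)` of `K_Θ`,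
as a boundary function. -/
def kfun (Θ : InnerFn) (l : ℂ) (θ : 𝕋) : ℂ :=
  (1 - (starRingEnd ℂ) (Θ.dval l) * Θ.toFun θ) / (1 - (starRingEnd ℂ) l * bz θ)

/-- The Stolz (nontangential approach) region at a boundary point `z0 ∈ ∂𝔻` with
aperture `κ`. -/
def stolzAt (z0 : ℂ) (κ : ℝ) : Set ℂ := {z : ℂ | ‖z‖ < 1 ∧ ‖z - z0‖ < κ * (1 - ‖z‖)}

/-- `f` has nontangential limit `L` at the boundary point `z0`. -/
def NTLim (f : ℂ → ℂ) (z0 L : ℂ) : Prop :=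
  ∀ κ : ℝ, 1 < κ → Tendsto f (nhdsWithin z0 (stolzAt z0 κ)) (nhds L)

/-- `Θ` has a finite angular derivative at `ζ ∈ ∂𝔻`, with nontangential boundary value `w`
(of modulus one) and angular derivative `w'`: equivalently, `(Θ(z) - w)/(z - ζ)` has
nontangential limit `w'` at `ζ`. -/
def HasAngularDeriv (Θ : InnerFn) (ζ w w' : ℂ) : Prop :=
  ‖w‖ = 1 ∧ NTLim Θ.dval ζ w ∧ NTLim (fun z => (Θ.dval z - w) / (z - ζ)) ζ w'

end

/-!
Test `A_φ` on the normalized reproducing kernel at the origin. The kernel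
`k₀ = 1 - conj Θ(0) · Θ` is bounded, lies in `K_Θ`, and, since `Θ ⟂ K_Θ`,
`‖k₀‖² = ⟨1, k₀⟩ = 1 - |Θ(0)|²`. As `φ k₀ = φ - conj Θ(0) · Θφ` and `P_Θ` kills `ΘH²`,
`A_φ (k₀ / ‖k₀‖) = P_Θ φ / ‖k₀‖`.
-/

open ComplexConjugate

lemma integrable_mul_conj {α : Type*} [MeasurableSpace α] {μ : Measure α} {f g : α → ℂ}
    (hf : MemLp f 2 μ) (hg : MemLp g 2 μ) : Integrable (fun x => f x * conj (g x)) μ :=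
  hf.integrable_mul hg.star

section InnerProduct

variable {f g h : 𝕋 → ℂ}

lemma conj_ip (f g : 𝕋 → ℂ) : conj (ip f g) = ip g f := by
  simp only [ip, ← integral_conj, map_mul, conj_conj, mul_comm]

lemma ip_const_mul_left (a : ℂ) (f g : 𝕋 → ℂ) : ip (fun θ => a * f θ) g = a * ip f g := by
  simp only [ip, mul_assoc, integral_const_mul]

lemma ip_add_left (hf : MemLp f 2 μT) (hg : MemLp g 2 μT) (hh : MemLp h 2 μT) :
    ip (fun θ => f θ + g θ) h = ip f h + ip g h := by
  simp only [ip, add_mul]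
  exact integral_add (integrable_mul_conj hf hh) (integrable_mul_conj hg hh)

lemma ip_sub_left (hf : MemLp f 2 μT) (hg : MemLp g 2 μT) (hh : MemLp h 2 μT) :
    ip (fun θ => f θ - g θ) h = ip f h - ip g h := by
  simp only [ip, sub_mul]
  exact integral_sub (integrable_mul_conj hf hh) (integrable_mul_conj hg hh)

lemma ip_one_left (h : 𝕋 → ℂ) : ip (fun _ => 1) h = conj (∫ θ, h θ ∂μT) := by
  simp only [ip, one_mul, integral_conj]

lemma ip_self (f : 𝕋 → ℂ) : ip f f = ((∫ θ, ‖f θ‖ ^ 2 ∂μT : ℝ) : ℂ) := by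
  rw [ip, ← integral_complex_ofReal]
  congr with θ
  rw [mul_conj, normSq_eq_norm_sq, ofReal_pow]

lemma nrm2_eq_sqrt_re_ip (f : 𝕋 → ℂ) : nrm2 f = Real.sqrt (ip f f).re := by
  rw [nrm2, ip_self, ofReal_re, Real.sqrt_eq_rpow]

lemma nrm2_const_mul (a : ℂ) (f : 𝕋 → ℂ) : nrm2 (fun θ => a * f θ) = ‖a‖ * nrm2 f := by
  simp only [nrm2, ← Real.sqrt_eq_rpow, norm_mul, mul_pow]
  rw [integral_const_mul, Real.sqrt_mul (sq_nonneg _), Real.sqrt_sq (norm_nonneg _)]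

end InnerProduct

section Hardy

variable {f g : 𝕋 → ℂ}

lemma memH2_const (c : ℂ) : MemH2 (fun _ => c) := by
  refine ⟨memLp_const c, fun n hn => ?_⟩
  have hc : (fun _ : 𝕋 => c) = fun θ => c * fourier 0 θ := by simp
  rw [hc, fourierCoeff.const_mul, fourierCoeff_fourier, Pi.single_eq_of_ne hn.ne, mul_zero]

lemma MemH2.const_mul (hf : MemH2 f) (a : ℂ) : MemH2 (fun θ => a * f θ) :=
  ⟨hf.1.const_mul a, fun n hn => by rw [fourierCoeff.const_mul, hf.2 n hn, mul_zero]⟩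

lemma MemH2.sub (hf : MemH2 f) (hg : MemH2 g) : MemH2 (fun θ => f θ - g θ) := by
  refine ⟨hf.1.sub hg.1, fun n hn => ?_⟩
  have hf' := (hf.1.integrable one_le_two).fourier_smul (-n)
  have hg' := (hg.1.integrable one_le_two).fourier_smul (-n)
  simp only [fourierCoeff, smul_sub]
  rw [integral_sub hf' hg']
  exact sub_eq_zero.mpr ((hf.2 n hn).trans (hg.2 n hn).symm)

lemma fourierCoeff_conj (g : 𝕋 → ℂ) (n : ℤ) :
    fourierCoeff (fun θ => conj (g θ)) n = conj (fourierCoeff g (-n)) := by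
  simp only [fourierCoeff, ← integral_conj, neg_neg, smul_eq_mul, map_mul, ← fourier_neg]

/-- Parseval's identity `∫ F G = ∑ₙ F̂(n) Ĝ(-n)`, in which only `n = 0` survives for `F, G ∈ H²`. -/
lemma integral_mul_of_memH2 {F G : 𝕋 → ℂ} (hF : MemH2 F) (hG : MemH2 G) :
    ∫ θ, F θ * G θ ∂μT = (∫ θ, F θ ∂μT) * ∫ θ, G θ ∂μT := by
  have hG' : MemLp (fun θ => conj (G θ)) 2 μT := hG.1.star
  set fL : Lp ℂ 2 μT := hF.1.toLp F
  set gL : Lp ℂ 2 μT := hG'.toLp _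
  have hrepr_f (n : ℤ) : fourierBasis.repr fL n = fourierCoeff F n := by
    rw [fourierBasis_repr, fourierCoeff_congr_ae hF.1.coeFn_toLp]
  have hrepr_g (n : ℤ) : fourierBasis.repr gL n = conj (fourierCoeff G (-n)) := by
    rw [fourierBasis_repr, fourierCoeff_congr_ae hG'.coeFn_toLp, fourierCoeff_conj]
  have hterm (n : ℤ) : inner ℂ gL (fourierBasis n) * inner ℂ (fourierBasis n) fL
      = fourierCoeff G (-n) * fourierCoeff F n := by
    rw [← fourierBasis.repr_apply_apply, hrepr_f, ← inner_conj_symm,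
      ← fourierBasis.repr_apply_apply, hrepr_g, conj_conj]
  have hinner : inner ℂ gL fL = ∫ θ, F θ * G θ ∂μT := by
    rw [L2.inner_def]
    refine integral_congr_ae ?_
    filter_upwards [hF.1.coeFn_toLp, hG'.coeFn_toLp] with θ hFθ hGθ
    rw [RCLike.inner_apply, hFθ, hGθ, conj_conj, mul_comm]
  rw [← hinner, ← (fourierBasis.hasSum_inner_mul_inner gL fL).tsum_eq, tsum_eq_single 0]
  · simp only [hterm, neg_zero, fourierCoeff, fourier_zero, one_smul]
    ring
  · intro n hn
    rcases hn.lt_or_gt with hn | hn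
    · rw [hterm, hF.2 n hn, mul_zero]
    · rw [hterm, hG.2 (-n) (by omega), zero_mul]

end Hardy

lemma poisson_zero (f : 𝕋 → ℂ) : poisson f 0 = ∫ θ, f θ ∂μT := by
  simp [poisson, bz, Circle.norm_coe]

namespace InnerFn

variable (Θ : InnerFn) {f : 𝕋 → ℂ}

lemma dval_zero : Θ.dval 0 = ∫ θ, Θ.toFun θ ∂μT :=
  poisson_zero _

lemma memLp_top : MemLp Θ.toFun ⊤ μT :=
  memLp_top_of_bound Θ.memH2.1.aestronglyMeasurable 1 (Θ.unimod.mono fun _ h => h.le)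

lemma memLp_mul (hf : MemLp f 2 μT) : MemLp (fun θ => Θ.toFun θ * f θ) 2 μT :=
  hf.mul' Θ.memLp_top

lemma ip_mul_mul (f g : 𝕋 → ℂ) :
    ip (fun θ => Θ.toFun θ * f θ) (fun θ => Θ.toFun θ * g θ) = ip f g := by
  refine integral_congr_ae ?_
  filter_upwards [Θ.unimod] with θ hθ
  have hΘθ : Θ.toFun θ * conj (Θ.toFun θ) = 1 := by
    rw [mul_conj, normSq_eq_norm_sq, hθ]; norm_num
  calc Θ.toFun θ * f θ * conj (Θ.toFun θ * g θ)
      = Θ.toFun θ * conj (Θ.toFun θ) * (f θ * conj (g θ)) := by rw [map_mul]; ring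
    _ = f θ * conj (g θ) := by rw [hΘθ, one_mul]

end InnerFn

section ModelSpace

variable {Θ : InnerFn} {g k u p : 𝕋 → ℂ}

lemma MemK.ip_mul_eq_zero (hk : MemK Θ k) (hg : MemH2 g) :
    ip (fun θ => Θ.toFun θ * g θ) k = 0 := by
  rw [← conj_ip, hk.2 g hg, map_zero]

lemma MemK.const_mul (hk : MemK Θ k) (a : ℂ) : MemK Θ (fun θ => a * k θ) :=
  ⟨hk.1.const_mul a, fun g hg => by rw [ip_const_mul_left, hk.2 g hg, mul_zero]⟩

lemma IsProjK.const_mul (hp : IsProjK Θ u p) (a : ℂ) :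
    IsProjK Θ (fun θ => a * u θ) (fun θ => a * p θ) :=
  ⟨hp.1.const_mul a, fun k hk => by simp only [← mul_sub, ip_const_mul_left, hp.2 k hk, mul_zero]⟩

lemma IsProjK.add_mul_of_memH2 (hp : IsProjK Θ u p) (hu : MemLp u 2 μT) (hg : MemH2 g) :
    IsProjK Θ (fun θ => u θ + Θ.toFun θ * g θ) p := by
  refine ⟨hp.1, fun k hk => ?_⟩
  have hsplit : (fun θ => u θ + Θ.toFun θ * g θ - p θ)
      = fun θ => (u θ - p θ) + Θ.toFun θ * g θ := by
    ext θ; ring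
  rw [hsplit, ip_add_left (f := fun θ => u θ - p θ) (hu.sub hp.1.1.1) (Θ.memLp_mul hg.1) hk.1.1,
    hp.2 k hk, hk.ip_mul_eq_zero hg, add_zero]

end ModelSpace

section Kernel

variable (Θ : InnerFn)

lemma kfun_zero : kfun Θ 0 = fun θ => 1 - conj (Θ.dval 0) * Θ.toFun θ := by
  ext θ; simp [kfun]

lemma memLp_top_kfun_zero : MemLp (kfun Θ 0) ⊤ μT := by
  rw [kfun_zero]
  exact (memLp_const 1).sub (Θ.memLp_top.const_mul _)

lemma memK_kfun_zero : MemK Θ (kfun Θ 0) := by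
  rw [kfun_zero]
  refine ⟨(memH2_const 1).sub (Θ.memH2.const_mul _), fun g hg => ?_⟩
  have hΘ := Θ.ip_mul_mul (fun _ => 1) g
  simp only [mul_one] at hΘ
  rw [ip_sub_left (memLp_const 1) (Θ.memH2.1.const_mul _) (Θ.memLp_mul hg.1),
    ip_const_mul_left, hΘ, ip_one_left, ip_one_left, integral_mul_of_memH2 Θ.memH2 hg,
    Θ.dval_zero, map_mul, sub_self]

lemma ip_kfun_zero_self : ip (kfun Θ 0) (kfun Θ 0) = ((1 - ‖Θ.dval 0‖ ^ 2 : ℝ) : ℂ) := by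
  have hK := memK_kfun_zero Θ
  have hΘ := hK.ip_mul_eq_zero (memH2_const 1)
  simp only [mul_one] at hΘ
  nth_rw 1 [kfun_zero]
  rw [ip_sub_left (memLp_const 1) (Θ.memH2.1.const_mul _) hK.1.1, ip_const_mul_left, hΘ,
    mul_zero, sub_zero, ip_one_left, kfun_zero, integral_sub (integrable_const _)
    ((Θ.memH2.1.integrable one_le_two).const_mul _), integral_const_mul, ← Θ.dval_zero]
  simp [mul_conj, normSq_eq_norm_sq]

lemma nrm2_kfun_zero : nrm2 (kfun Θ 0) = Real.sqrt (1 - ‖Θ.dval 0‖ ^ 2) := by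
  rw [nrm2_eq_sqrt_re_ip, ip_kfun_zero_self, ofReal_re]

end Kernel

theorem ttNorm_lower_proj_H2_general (Θ : InnerFn) (φ : 𝕋 → ℂ)
    (hφ : MemH2 φ) (p : 𝕋 → ℂ) (hp : IsProjK Θ φ p) :
    ENNReal.ofReal (nrm2 p / Real.sqrt (1 - ‖Θ.dval 0‖ ^ 2)) ≤ ttNorm Θ φ := by
  set c := Real.sqrt (1 - ‖Θ.dval 0‖ ^ 2)
  have hc_nonneg : 0 ≤ c := Real.sqrt_nonneg _
  obtain hc | hc := hc_nonneg.eq_or_lt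
  · rw [← hc, div_zero, ENNReal.ofReal_zero]
    exact zero_le
  set a : ℂ := ((c⁻¹ : ℝ) : ℂ)
  have ha : ‖a‖ = c⁻¹ := by simp [a, hc_nonneg]
  have hproj : IsProjK Θ (fun θ => φ θ * (a * kfun Θ 0 θ)) (fun θ => a * p θ) := by
    convert (hp.const_mul a).add_mul_of_memH2 (hφ.1.const_mul a)
      (hφ.const_mul (-(a * conj (Θ.dval 0)))) using 2 with θ
    rw [kfun_zero]
    ring
  refine le_sSup ⟨_, _, (memK_kfun_zero Θ).const_mul a, (memLp_top_kfun_zero Θ).const_mul a,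
    ?_, hproj, ?_⟩
  · rw [nrm2_const_mul, nrm2_kfun_zero, ha, inv_mul_cancel₀ hc.ne']
  · rw [nrm2_const_mul, ha, div_eq_inv_mul]

/-- for `φ ∈ H²`, `‖P_Θ(φ)‖ / (1-|Θ(0)|²)^{1/2} ≤ ‖A_φ‖`. -/
theorem ttNorm_lower_proj_H2 (Θ : InnerFn) (hΘ : Θ.NonConst) (φ : 𝕋 → ℂ)
    (hφ : MemH2 φ) (p : 𝕋 → ℂ) (hp : IsProjK Θ φ p) :
    ENNReal.ofReal (nrm2 p / Real.sqrt (1 - ‖Θ.dval 0‖ ^ 2)) ≤ ttNorm Θ φ :=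
  ttNorm_lower_proj_H2_general Θ φ hφ p hp
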